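/- arXiv:2405.07811 — 5 statements merged into one kernel-verified Lean document; each statement's English description precedes it below -/
import Mathlib

section
/- For all natural numbers m and l with l ≤ m, the Gram coefficient satisfies the closed formula a_{m−l, m+l} = (−1)^l · T^{−1/2} · 2^{−2m − 1/2} · (2m)! / ( m! · √((m−l)! · (m+l)!) ). -/
open Real MeasureTheory Matrix Filter

/-- Physicists' Hermite polynomials: H_0 = 1, H_1 = 2x, H_{n+1} = 2x H_n - 2n H_{n-1}. -/
noncomputable def hermiteH : ℕ → ℝ → ℝ
  | 0, _ => 1
  | 1, x => 2 * x
  | (n + 2), x => 2 * x * hermiteH (n + 1) x - 2 * (n + 1) * hermiteH n x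

/-- Asymmetric Hermite basis function ψ_m. -/
noncomputable def psi (T : ℝ) (m : ℕ) (v : ℝ) : ℝ :=
  Real.exp (-v ^ 2 / T) * T ^ (-(1 : ℝ) / 2) *
    ((2 : ℝ) ^ m * (Nat.factorial m : ℝ) * Real.sqrt π) ^ (-(1 : ℝ) / 2) *
    hermiteH m (v / Real.sqrt T)

/-- Gram coefficient a_{m,n} = ∫ ψ_m ψ_n. -/
noncomputable def gramA (T : ℝ) (m n : ℕ) : ℝ := ∫ v : ℝ, psi T m v * psi T n v

/-!
After the substitution `v = √T x`, `a_{a,b}` is an explicit normalising factor times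
`I(a, b) = ∫ H_a H_b e^{-2x²} dx`. Integrating `(H_a H_b e^{-2x²})'` over `ℝ` and using
`H_n' = 2n H_{n-1}` together with the three-term recurrence gives
`I(a, b + 1) = a I(a - 1, b) - b I(a, b - 1)`, whose solution on the line `a + b = 2m` is
`I(a, b) = (-1)^(m + b) √(π/2) (2m)! / (2^m m!)`, by induction on `m`.
-/

open Polynomial

noncomputable def physHermite : ℕ → ℝ[X]
  | 0 => 1
  | 1 => 2 * X
  | (n + 2) => 2 * X * physHermite (n + 1) - C (2 * (n + 1 : ℝ)) * physHermite n

theorem physHermite_succ (n : ℕ) :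
    physHermite (n + 1) = 2 * X * physHermite n - C (2 * n : ℝ) * physHermite (n - 1) := by
  cases n with
  | zero => simp [physHermite]
  | succ n => simp [physHermite]

theorem eval_physHermite (n : ℕ) (x : ℝ) : (physHermite n).eval x = hermiteH n x := by
  induction n using Nat.strong_induction_on with
  | _ n ih =>
    match n with
    | 0 => simp [physHermite, hermiteH]
    | 1 => simp [physHermite, hermiteH]
    | n + 2 => simp [physHermite, hermiteH, ih n (by omega), ih (n + 1) (by omega)]

theorem derivative_physHermite (n : ℕ) :
    derivative (physHermite n) = C (2 * n : ℝ) * physHermite (n - 1) := by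
  induction n using Nat.strong_induction_on with
  | _ n ih =>
    match n with
    | 0 => simp [physHermite]
    | 1 => simp [physHermite]; rfl
    | n + 2 =>
      rw [physHermite, show n + 2 - 1 = n + 1 by omega]
      simp only [derivative_sub, derivative_mul, derivative_C, derivative_X, derivative_ofNat,
        ih (n + 1) (by omega), ih n (by omega), Nat.add_sub_cancel]
      rw [physHermite_succ n]
      simp only [map_mul, map_add, map_natCast, map_ofNat, map_one, Nat.cast_add, Nat.cast_ofNat]
      ring

theorem integrable_eval_mul_exp_neg_mul_sq (P : ℝ[X]) {b : ℝ} (hb : 0 < b) :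
    Integrable fun x : ℝ => P.eval x * exp (-b * x ^ 2) := by
  simp_rw [eval_eq_sum_range, Finset.sum_mul, mul_assoc]
  refine integrable_finsetSum _ fun i _ => .const_mul ?_ _
  simpa [Real.rpow_natCast] using
    integrable_rpow_mul_exp_neg_mul_sq hb (s := i) (by linarith [i.cast_nonneg (α := ℝ)])

noncomputable def gaussianFunctional {b : ℝ} (hb : 0 < b) : ℝ[X] →ₗ[ℝ] ℝ where
  toFun P := ∫ x, P.eval x * exp (-b * x ^ 2)
  map_add' P Q := by
    simp only [eval_add, add_mul]
    exact integral_add (integrable_eval_mul_exp_neg_mul_sq P hb)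
      (integrable_eval_mul_exp_neg_mul_sq Q hb)
  map_smul' c P := by
    simp only [eval_smul, smul_eq_mul, mul_assoc, RingHom.id_apply]
    exact integral_const_mul c _

section gaussianFunctional

variable {b : ℝ} (hb : 0 < b)

theorem gaussianFunctional_apply (P : ℝ[X]) :
    gaussianFunctional hb P = ∫ x, P.eval x * exp (-b * x ^ 2) := rfl

theorem gaussianFunctional_C_mul (c : ℝ) (P : ℝ[X]) :
    gaussianFunctional hb (C c * P) = c * gaussianFunctional hb P := by
  rw [← smul_eq_C_mul, map_smul, smul_eq_mul]

theorem gaussianFunctional_one : gaussianFunctional hb 1 = √(π / b) := by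
  simpa [gaussianFunctional_apply] using integral_gaussian b

theorem gaussianFunctional_derivative (P : ℝ[X]) :
    gaussianFunctional hb (derivative P) = 2 * b * gaussianFunctional hb (X * P) := by
  have hderiv : ∀ x, HasDerivAt (fun x => P.eval x * exp (-b * x ^ 2))
      ((derivative P - C (2 * b) * (X * P)).eval x * exp (-b * x ^ 2)) x := by
    intro x
    have hexp : HasDerivAt (fun x => exp (-b * x ^ 2)) (exp (-b * x ^ 2) * (-b * (2 * x))) x := by
      simpa using ((hasDerivAt_pow 2 x).const_mul (-b)).exp
    refine ((P.hasDerivAt x).mul hexp).congr_deriv ?_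
    simp only [eval_sub, eval_mul, eval_C, eval_X]
    ring
  have hzero := integral_eq_zero_of_hasDerivAt_of_integrable hderiv
    (integrable_eval_mul_exp_neg_mul_sq _ hb) (integrable_eval_mul_exp_neg_mul_sq P hb)
  rw [← gaussianFunctional_apply, map_sub, gaussianFunctional_C_mul, sub_eq_zero] at hzero
  exact hzero

end gaussianFunctional

noncomputable def hermitePairing (a b : ℕ) : ℝ :=
  gaussianFunctional (two_pos : (0 : ℝ) < 2) (physHermite a * physHermite b)

theorem hermitePairing_comm (a b : ℕ) : hermitePairing a b = hermitePairing b a := by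
  rw [hermitePairing, hermitePairing, mul_comm]

/-- The truncated subtractions `a - 1`, `b - 1` are harmless: their coefficients vanish. -/
theorem hermitePairing_succ_right (a b : ℕ) :
    hermitePairing a (b + 1) = a * hermitePairing (a - 1) b - b * hermitePairing a (b - 1) := by
  have hsucc : physHermite a * physHermite (b + 1) =
      C 2 * (X * (physHermite a * physHermite b)) -
        C (2 * b : ℝ) * (physHermite a * physHermite (b - 1)) := by
    rw [physHermite_succ, ← map_ofNat C 2]
    ring
  have hprod : derivative (physHermite a * physHermite b) =
      C (2 * a : ℝ) * (physHermite (a - 1) * physHermite b) +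
        C (2 * b : ℝ) * (physHermite a * physHermite (b - 1)) := by
    rw [derivative_mul, derivative_physHermite, derivative_physHermite]
    ring
  have hparts := gaussianFunctional_derivative two_pos (physHermite a * physHermite b)
  rw [hprod, map_add, gaussianFunctional_C_mul, gaussianFunctional_C_mul] at hparts
  unfold hermitePairing
  rw [hsucc, map_sub, gaussianFunctional_C_mul, gaussianFunctional_C_mul]
  linarith

noncomputable def hermitePairingConst (m : ℕ) : ℝ :=
  √(π / 2) * (2 * m).factorial / (2 ^ m * m.factorial)

theorem hermitePairingConst_succ (m : ℕ) :
    hermitePairingConst (m + 1) = (2 * m + 1) * hermitePairingConst m := by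
  simp only [hermitePairingConst]
  rw [show 2 * (m + 1) = 2 * m + 1 + 1 by ring, Nat.factorial_succ, Nat.factorial_succ,
    Nat.factorial_succ]
  push_cast
  field_simp
  ring

theorem hermitePairing_eq_of_add_eq {a b m : ℕ} (h : a + b = 2 * m) :
    hermitePairing a b = (-1) ^ (m + b) * hermitePairingConst m := by
  induction m generalizing a b with
  | zero =>
    obtain ⟨rfl, rfl⟩ : a = 0 ∧ b = 0 := by omega
    simp [hermitePairing, physHermite, gaussianFunctional_one, hermitePairingConst]
  | succ m ih =>
    have hright : ∀ a b, a + (b + 1) = 2 * (m + 1) →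
        hermitePairing a (b + 1) = (-1) ^ (m + 1 + (b + 1)) * hermitePairingConst (m + 1) := by
      intro a b hab
      have hlower_left : (a : ℝ) * hermitePairing (a - 1) b =
          a * ((-1) ^ (m + b) * hermitePairingConst m) := by
        rcases a with _ | a
        · simp
        · rw [Nat.add_sub_cancel, ih (by omega)]
      have hlower_right : (b : ℝ) * hermitePairing a (b - 1) =
          -(b * ((-1) ^ (m + b) * hermitePairingConst m)) := by
        rcases b with _ | b
        · simp
        · rw [Nat.add_sub_cancel, ih (by omega), ← add_assoc, pow_succ]
          ring
      have hsum : (a : ℝ) + b = 2 * m + 1 := by exact_mod_cast (by omega : a + b = 2 * m + 1)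
      rw [hermitePairing_succ_right, hlower_left, hlower_right, hermitePairingConst_succ,
        show m + 1 + (b + 1) = m + b + 2 by ring, pow_add (-1 : ℝ) (m + b) 2, neg_one_sq]
      linear_combination (-1) ^ (m + b) * hermitePairingConst m * hsum
    rcases b with _ | b
    · obtain rfl : a = 2 * m + 1 + 1 := by omega
      rw [hermitePairing_comm, hright 0 (2 * m + 1) (by omega),
        show m + 1 + (2 * m + 1 + 1) = m + 1 + 0 + 2 * (m + 1) by ring, pow_add, pow_mul,
        neg_one_sq, one_pow, mul_one]
    · exact hright a b h

theorem rpow_neg_one_half_eq_inv_sqrt {x : ℝ} (hx : 0 ≤ x) : x ^ (-(1 : ℝ) / 2) = (√x)⁻¹ := by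
  rw [neg_div, Real.rpow_neg hx, Real.sqrt_eq_rpow]

theorem psi_sqrt_mul {T : ℝ} (hT : 0 < T) (n : ℕ) (x : ℝ) :
    psi T n (√T * x) = (√T)⁻¹ * ((2 : ℝ) ^ n * n.factorial * √π) ^ (-(1 : ℝ) / 2) *
      (hermiteH n x * exp (-x ^ 2)) := by
  have hsqrt : √T ≠ 0 := (Real.sqrt_pos.2 hT).ne'
  rw [psi, rpow_neg_one_half_eq_inv_sqrt hT.le, mul_div_cancel_left₀ x hsqrt, mul_pow,
    Real.sq_sqrt hT.le, neg_div, mul_div_cancel_left₀ _ hT.ne']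
  ring

theorem gramA_eq_hermitePairing {T : ℝ} (hT : 0 < T) (a b : ℕ) :
    gramA T a b = T ^ (-(1 : ℝ) / 2) * hermitePairing a b /
      √(2 ^ (a + b) * (a.factorial * b.factorial) * π) := by
  have hnorm : ((2 : ℝ) ^ a * a.factorial * √π) ^ (-(1 : ℝ) / 2) *
      ((2 : ℝ) ^ b * b.factorial * √π) ^ (-(1 : ℝ) / 2) =
        (√(2 ^ (a + b) * (a.factorial * b.factorial) * π))⁻¹ := by
    rw [← Real.mul_rpow (by positivity) (by positivity), rpow_neg_one_half_eq_inv_sqrt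
      (by positivity)]
    congr 2
    rw [pow_add]
    linear_combination (2 ^ a * 2 ^ b * a.factorial * b.factorial : ℝ) *
      Real.mul_self_sqrt pi_pos.le
  have hintegrand : ∀ x, psi T a (√T * x) * psi T b (√T * x) =
      (√T)⁻¹ ^ 2 * (√(2 ^ (a + b) * (a.factorial * b.factorial) * π))⁻¹ *
        ((physHermite a * physHermite b).eval x * exp (-2 * x ^ 2)) := by
    intro x
    rw [psi_sqrt_mul hT, psi_sqrt_mul hT, ← hnorm, eval_mul, eval_physHermite,
      eval_physHermite, show -2 * x ^ 2 = -x ^ 2 + -x ^ 2 by ring, exp_add]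
    ring
  have hscale := Measure.integral_comp_mul_left (fun v => psi T a v * psi T b v) √T
  rw [abs_inv, abs_of_pos (Real.sqrt_pos.2 hT), smul_eq_mul] at hscale
  simp only [hintegrand, integral_const_mul] at hscale
  rw [← gaussianFunctional_apply two_pos] at hscale
  change _ * hermitePairing a b = _ at hscale
  rw [gramA, rpow_neg_one_half_eq_inv_sqrt hT.le]
  field_simp at hscale ⊢
  exact hscale.symm

theorem gramA_closed_formula (T : ℝ) (hT : 0 < T) (m l : ℕ) (hl : l ≤ m) :
    gramA T (m - l) (m + l) =
      (-1 : ℝ) ^ l * T ^ (-(1 : ℝ) / 2) * (2 : ℝ) ^ (-(2 * (m : ℝ)) - 1 / 2) *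
        (Nat.factorial (2 * m) : ℝ) /
        ((Nat.factorial m : ℝ) *
          Real.sqrt ((Nat.factorial (m - l) : ℝ) * (Nat.factorial (m + l) : ℝ))) := by
  have hsum : m - l + (m + l) = 2 * m := by omega
  have hsign : (-1 : ℝ) ^ (m + (m + l)) = (-1) ^ l := by
    rw [show m + (m + l) = 2 * m + l by ring, pow_add, pow_mul, neg_one_sq, one_pow, one_mul]
  have hpow : (2 : ℝ) ^ (-(2 * (m : ℝ)) - 1 / 2) = (2 ^ (2 * m) * √2)⁻¹ := by
    rw [← neg_add', Real.rpow_neg zero_le_two, Real.rpow_add zero_lt_two, ← Real.sqrt_eq_rpow,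
      ← Nat.cast_ofNat, ← Nat.cast_mul, Real.rpow_natCast]
  have hsqrt : √(2 ^ (2 * m) * ((m - l).factorial * (m + l).factorial) * π : ℝ) =
      2 ^ m * √((m - l).factorial * (m + l).factorial) * √π := by
    rw [pow_mul', Real.sqrt_mul (by positivity), Real.sqrt_mul (by positivity),
      Real.sqrt_sq (by positivity)]
  rw [gramA_eq_hermitePairing hT, hermitePairing_eq_of_add_eq hsum, hsum, hsign, hsqrt, hpow,
    hermitePairingConst, Real.sqrt_div' _ zero_le_two]
  field_simp
  ring
end

section
/- For every natural number k, the Gram coefficient of the zeroth asymmetric Hermite function against an even-indexed one satisfies a_{0, 2k} = (−1)^k · T^{−1/2} · 2^{−2k − 1/2} · √((2k)!) / k!. -/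
open Real MeasureTheory Matrix Filter

/-! Substituting `v = √T u` turns `a_{0,n}` into an explicit normalising constant times
`I n = ∫ e^{-2u²} H_n(u) du`. Since `H_{n+1}' = 2(n+1) H_n`, the recurrence gives
`(e^{-2u²} H_{n+1})' = -2 e^{-2u²} (H_{n+2} + (n+1) H_n)`, and this derivative of an integrable
function integrates to zero; hence `I (n+2) = -(n+1) I n`, and `I 0 = √(π/2)` is the Gaussian
integral. -/

open Polynomial Nat

lemma integrable_pow_mul_exp_neg_mul_sq {b : ℝ} (hb : 0 < b) (n : ℕ) :
    Integrable fun x : ℝ => x ^ n * exp (-b * x ^ 2) := by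
  simpa only [rpow_natCast] using
    integrable_rpow_mul_exp_neg_mul_sq hb (neg_one_lt_zero.trans_le n.cast_nonneg)

lemma integrable_exp_neg_mul_sq_mul_eval {b : ℝ} (hb : 0 < b) (p : ℝ[X]) :
    Integrable fun x : ℝ => exp (-b * x ^ 2) * p.eval x := by
  induction p using Polynomial.induction_on' with
  | add p q hp hq =>
    exact (hp.add hq).congr (.of_forall fun x => by simp only [Pi.add_apply, eval_add, mul_add])
  | monomial n c =>
    exact ((integrable_pow_mul_exp_neg_mul_sq hb n).const_mul c).congr
      (.of_forall fun x => by simp only [eval_monomial]; ring)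

lemma hermiteH_add_two (n : ℕ) (x : ℝ) :
    hermiteH (n + 2) x = 2 * x * hermiteH (n + 1) x - 2 * (n + 1) * hermiteH n x :=
  rfl

lemma exists_hermiteH_eq_eval : ∀ n : ℕ, ∃ p : ℝ[X], ∀ x, hermiteH n x = p.eval x
  | 0 => ⟨1, fun _ => by simp [hermiteH]⟩
  | 1 => ⟨C 2 * X, fun _ => by simp [hermiteH]⟩
  | n + 2 => by
    obtain ⟨p, hp⟩ := exists_hermiteH_eq_eval n
    obtain ⟨q, hq⟩ := exists_hermiteH_eq_eval (n + 1)
    exact ⟨C 2 * X * q - C (2 * (n + 1) : ℝ) * p, fun x => by simp [hermiteH_add_two, hp, hq]⟩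

lemma hasDerivAt_hermiteH_succ : ∀ (n : ℕ) (x : ℝ),
    HasDerivAt (hermiteH (n + 1)) (2 * (n + 1) * hermiteH n x) x
  | 0, x => by simpa [hermiteH] using (hasDerivAt_id x).const_mul (2 : ℝ)
  | 1, x => by
    have e : hermiteH 2 = fun y => 4 * y ^ 2 - 2 := funext fun y => by norm_num [hermiteH]; ring
    rw [e]
    exact (((hasDerivAt_pow 2 x).const_mul 4).sub_const 2).congr_deriv (by norm_num [hermiteH])
  | n + 2, x => by
    have e : hermiteH (n + 3) =
        fun y => 2 * y * hermiteH (n + 2) y - 2 * (n + 2) * hermiteH (n + 1) y :=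
      funext fun y => by rw [hermiteH_add_two]; push_cast; ring
    rw [e]
    refine ((((hasDerivAt_id x).const_mul 2).mul (hasDerivAt_hermiteH_succ (n + 1) x)).sub
      ((hasDerivAt_hermiteH_succ n x).const_mul (2 * ((n : ℝ) + 2)))).congr_deriv ?_
    rw [hermiteH_add_two, id]
    push_cast
    ring

lemma integrable_exp_neg_mul_sq_mul_hermiteH {b : ℝ} (hb : 0 < b) (n : ℕ) :
    Integrable fun x : ℝ => exp (-b * x ^ 2) * hermiteH n x := by
  obtain ⟨p, hp⟩ := exists_hermiteH_eq_eval n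
  simpa only [hp] using integrable_exp_neg_mul_sq_mul_eval hb p

lemma integral_exp_neg_two_mul_sq_mul_hermiteH_add_two (n : ℕ) :
    ∫ x : ℝ, exp (-2 * x ^ 2) * hermiteH (n + 2) x
      = -(n + 1) * ∫ x : ℝ, exp (-2 * x ^ 2) * hermiteH n x := by
  have hderiv : ∀ x : ℝ, HasDerivAt (fun y => exp (-2 * y ^ 2) * hermiteH (n + 1) y)
      (-2 * (exp (-2 * x ^ 2) * hermiteH (n + 2) x)
        + -(2 * (n + 1)) * (exp (-2 * x ^ 2) * hermiteH n x)) x := by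
    intro x
    have hgauss : HasDerivAt (fun y : ℝ => exp (-2 * y ^ 2)) (exp (-2 * x ^ 2) * (-4 * x)) x :=
      ((hasDerivAt_pow 2 x).const_mul (-2 : ℝ)).exp.congr_deriv (by simp; ring)
    refine (hgauss.mul (hasDerivAt_hermiteH_succ n x)).congr_deriv ?_
    rw [hermiteH_add_two]
    ring
  have hint := integrable_exp_neg_mul_sq_mul_hermiteH two_pos
  have hzero := integral_eq_zero_of_hasDerivAt_of_integrable hderiv
    (((hint (n + 2)).const_mul _).add ((hint n).const_mul _)) (hint (n + 1))
  rw [integral_add ((hint _).const_mul _) ((hint _).const_mul _), integral_const_mul,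
    integral_const_mul] at hzero
  linarith

lemma integral_exp_neg_two_mul_sq_mul_hermiteH_two_mul (k : ℕ) :
    ∫ x : ℝ, exp (-2 * x ^ 2) * hermiteH (2 * k) x
      = (-1) ^ k * (2 * k)! / (2 ^ k * k !) * √(π / 2) := by
  induction k with
  | zero => simpa [hermiteH] using integral_gaussian 2
  | succ k ih =>
    rw [show 2 * (k + 1) = 2 * k + 2 by ring, integral_exp_neg_two_mul_sq_mul_hermiteH_add_two, ih,
      factorial_succ, factorial_succ, factorial_succ]
    push_cast
    field_simp
    ring

lemma gramA_zero_eq {T : ℝ} (hT : 0 < T) (n : ℕ) :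
    gramA T 0 n = T ^ (-(1 : ℝ) / 2) * (2 ^ n * n ! * π) ^ (-(1 : ℝ) / 2)
      * ∫ u : ℝ, exp (-2 * u ^ 2) * hermiteH n u := by
  have hexp (v : ℝ) : exp (-v ^ 2 / T) * exp (-v ^ 2 / T) = exp (-2 * (v / √T) ^ 2) := by
    rw [← exp_add, div_pow, sq_sqrt hT.le]
    ring_nf
  have hnorm : (√π) ^ (-(1 : ℝ) / 2) * (2 ^ n * n ! * √π) ^ (-(1 : ℝ) / 2)
      = (2 ^ n * n ! * π) ^ (-(1 : ℝ) / 2) := by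
    rw [← mul_rpow (by positivity) (by positivity)]
    congr 1
    linear_combination (2 ^ n * n ! : ℝ) * mul_self_sqrt pi_pos.le
  have hrpow_mul_sqrt : T ^ (-(1 : ℝ) / 2) * √T = 1 := by
    rw [sqrt_eq_rpow, ← rpow_add hT]
    norm_num
  have hpsi (v : ℝ) : psi T 0 v * psi T n v = T ^ (-(1 : ℝ) / 2) * T ^ (-(1 : ℝ) / 2)
      * (2 ^ n * n ! * π) ^ (-(1 : ℝ) / 2)
      * (exp (-2 * (v / √T) ^ 2) * hermiteH n (v / √T)) := by
    rw [← hnorm, ← hexp]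
    simp only [psi, hermiteH, pow_zero, factorial_zero, cast_one, one_mul, mul_one]
    ring
  simp_rw [gramA, hpsi]
  rw [integral_const_mul, Measure.integral_comp_div (fun u => exp (-2 * u ^ 2) * hermiteH n u),
    abs_of_pos (sqrt_pos.2 hT), smul_eq_mul]
  linear_combination (T ^ (-(1 : ℝ) / 2) * (2 ^ n * n ! * π) ^ (-(1 : ℝ) / 2)
    * ∫ u : ℝ, exp (-2 * u ^ 2) * hermiteH n u) * hrpow_mul_sqrt

theorem gramA_zero_even (T : ℝ) (hT : 0 < T) (k : ℕ) :
    gramA T 0 (2 * k) =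
      (-1 : ℝ) ^ k * T ^ (-(1 : ℝ) / 2) * (2 : ℝ) ^ (-(2 * (k : ℝ)) - 1 / 2) *
        Real.sqrt (Nat.factorial (2 * k) : ℝ) / (Nat.factorial k : ℝ) := by
  rw [gramA_zero_eq hT, integral_exp_neg_two_mul_sq_mul_hermiteH_two_mul]
  have hnorm :
      (2 ^ (2 * k) * (2 * k)! * π : ℝ) ^ (-(1 : ℝ) / 2) = (2 ^ k * √(2 * k)! * √π)⁻¹ := by
    rw [neg_div, rpow_neg (by positivity), ← sqrt_eq_rpow, sqrt_mul (by positivity),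
      sqrt_mul (by positivity), pow_mul', sqrt_sq (by positivity)]
  have htwo : (2 : ℝ) ^ (-(2 * (k : ℝ)) - 1 / 2) = (2 ^ k * 2 ^ k * √2)⁻¹ := by
    rw [rpow_sub two_pos, ← sqrt_eq_rpow, rpow_neg two_pos.le, ← pow_add, ← two_mul]
    norm_cast
    ring
  rw [hnorm, htwo, sqrt_div pi_pos.le]
  field_simp
  exact (sq_sqrt (by positivity)).symm
end

section
/- For all natural numbers M ≥ 1 and q with 0 ≤ q ≤ M−1, the following alternating binomial identity holds: ∑_{k=0}^{M−1} (−1)^{M−k+1} · C(2q+2k+2, 2q+1) · C(q+M+1, q+k+1) = C(2q+2M+2, 2q+1), where C(a,b) denotes the binomial coefficient. -/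
/-!
For `r < N`, the alternating sum `∑ⱼ (-1)ʲ C(N, j) C(2j, r)` is the coefficient of `Xʳ` in
`(1 - (X + 1)²)ᴺ = (-X (X + 2))ᴺ`, hence zero. Take `N = q + M + 1` and `r = 2q + 1`: the terms
with `j ≤ q` vanish since `2j < r`, the term `j = N` is `± C(2q + 2M + 2, 2q + 1)`, and the
remaining ones, reindexed by `j = q + 1 + k`, form the left-hand side up to a global sign.
-/

open Finset Polynomial

theorem neg_one_pow_sub_eq_pow_add {R : Type*} [Monoid R] [HasDistribNeg R] {m n : ℕ}
    (h : m ≤ n) : (-1 : R) ^ (n - m) = (-1) ^ (n + m) := by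
  rw [show n + m = n - m + 2 * m by omega, pow_add, pow_mul, neg_one_sq, one_pow, mul_one]

theorem sum_neg_one_pow_mul_choose_mul_choose_mul_eq_zero (a : ℕ) {N r : ℕ} (h : r < N) :
    ∑ j ∈ range (N + 1), (-1 : ℤ) ^ j * N.choose j * (a * j).choose r = 0 := by
  have hX : (X : ℤ[X]) ∣ -(X + 1) ^ a + 1 := by
    have := dvd_neg.2 (sub_dvd_pow_sub_pow (X + 1 : ℤ[X]) 1 a)
    rwa [add_sub_cancel_right, one_pow, neg_sub, sub_eq_neg_add] at this
  have hcoeff := X_pow_dvd_iff.1 (pow_dvd_pow_of_dvd hX N) r h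
  rw [add_pow, finsetSum_coeff] at hcoeff
  rw [← hcoeff]
  refine sum_congr rfl fun j _ => ?_
  have hterm : (-(X + 1) ^ a) ^ j * 1 ^ (N - j) * (N.choose j : ℤ[X]) =
      C ((-1 : ℤ) ^ j * N.choose j) * (X + 1) ^ (a * j) := by
    rw [pow_mul', neg_pow]
    simp only [one_pow, mul_one, map_mul, map_pow, map_neg, map_one, map_natCast]
    ring
  rw [hterm, coeff_C_mul, coeff_X_add_one_pow]

theorem sum_neg_one_pow_mul_choose_odd_mul_choose_eq_zero {q M : ℕ} (h : q < M) :
    ∑ k ∈ range (M + 1), (-1 : ℤ) ^ k * (2 * q + 2 * k + 2).choose (2 * q + 1) *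
      (q + M + 1).choose (q + k + 1) = 0 := by
  have hsum := sum_neg_one_pow_mul_choose_mul_choose_mul_eq_zero 2 (N := q + M + 1)
    (r := 2 * q + 1) (by omega)
  have hlow : ∀ j ∈ range (q + 1),
      (-1 : ℤ) ^ j * (q + M + 1).choose j * (2 * j).choose (2 * q + 1) = 0 := fun j hj => by
    rw [Nat.choose_eq_zero_of_lt (n := 2 * j) (by have := mem_range.1 hj; omega),
      Nat.cast_zero, mul_zero]
  rw [show q + M + 1 + 1 = q + 1 + (M + 1) by omega, sum_range_add, sum_eq_zero hlow,
    zero_add] at hsum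
  simp_rw [pow_add (-1 : ℤ) (q + 1), mul_assoc, ← mul_sum] at hsum
  rw [← (mul_eq_zero.1 hsum).resolve_left (by simp)]
  refine sum_congr rfl fun k _ => ?_
  rw [show 2 * (q + 1 + k) = 2 * q + 2 * k + 2 by ring, show q + 1 + k = q + k + 1 by ring]
  ring

theorem alternating_binomial_identity_odd (M q : ℕ) (hM : 1 ≤ M) (hq : q ≤ M - 1) :
    ∑ k ∈ Finset.range M,
        (-1 : ℤ) ^ (M - k + 1) * (Nat.choose (2 * q + 2 * k + 2) (2 * q + 1) : ℤ) *
          (Nat.choose (q + M + 1) (q + k + 1) : ℤ) =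
      (Nat.choose (2 * q + 2 * M + 2) (2 * q + 1) : ℤ) := by
  have h := sum_neg_one_pow_mul_choose_odd_mul_choose_eq_zero (q := q) (M := M) (by omega)
  rw [sum_range_succ, Nat.choose_self, Nat.cast_one, mul_one] at h
  calc _ = (-1) ^ (M + 1) * ∑ k ∈ range M, (-1 : ℤ) ^ k *
        (2 * q + 2 * k + 2).choose (2 * q + 1) * (q + M + 1).choose (q + k + 1) := by
        rw [mul_sum]
        refine sum_congr rfl fun k hk => ?_
        rw [pow_succ, neg_one_pow_sub_eq_pow_add (mem_range.1 hk).le, pow_add]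
        ring
    _ = ((-1) ^ M) ^ 2 * (2 * q + 2 * M + 2).choose (2 * q + 1) := by
        rw [eq_neg_of_add_eq_zero_left h]
        ring
    _ = _ := by rw [← pow_mul, pow_mul', neg_one_sq, one_pow, one_mul]
end

section
/- For all natural numbers M ≥ 1 and q with 0 ≤ q ≤ M−1, the following alternating binomial identity holds: ∑_{k=0}^{M−1} (−1)^{M−k+1} · C(2q+2k, 2q) · C(q+M, q+k) = C(2q+2M, 2q), where C(a,b) denotes the binomial coefficient. -/
/-!
The `n`-th finite difference of a polynomial of degree `< n` vanishes. Apply this with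
`n = q + M` to `i ↦ C(2i, 2q)`, a polynomial of degree `2q < q + M` in `i`: the terms with
`i < q` vanish, and re-indexing `i = q + k` leaves the sum of the theorem plus its `k = M`
term, which is `C(2q + 2M, 2q)`.
-/

open Finset Polynomial Nat

theorem Polynomial.alternating_sum_range_choose_mul_eval_eq_zero {R : Type*} [CommRing R]
    {P : R[X]} {n : ℕ} (hP : P.natDegree < n) :
    ∑ k ∈ range (n + 1), (-1 : R) ^ (n - k) * n.choose k * P.eval (k : R) = 0 := by
  have h := congr_fun (fwdDiff_iter_eq_zero_of_degree_lt hP) 0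
  rw [fwdDiff_iter_eq_sum_shift] at h
  simpa [zsmul_eq_mul] using h

theorem exists_natDegree_le_eval_eq_choose (K : Type*) [Field K] [CharZero K] (a s r : ℕ) :
    ∃ P : K[X], P.natDegree ≤ r ∧ ∀ k : ℕ, P.eval (k : K) = (a * k + s).choose r := by
  refine ⟨C (r ! : K)⁻¹ * (descPochhammer K r).comp (C (a : K) * X + C (s : K)), ?_, fun k ↦ ?_⟩
  · calc _ ≤ ((descPochhammer K r).comp (C (a : K) * X + C (s : K))).natDegree :=
          natDegree_C_mul_le _ _
      _ ≤ (descPochhammer K r).natDegree * (C (a : K) * X + C (s : K)).natDegree :=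
          natDegree_comp_le
      _ ≤ r * 1 := by
          rw [descPochhammer_natDegree]
          exact Nat.mul_le_mul_left _ natDegree_linear_le
      _ = r := mul_one r
  · rw [Nat.cast_choose_eq_descPochhammer_div]
    simp [div_eq_inv_mul]

theorem alternating_sum_range_choose_mul_choose_eq_zero {n r : ℕ} (h : r < n) (a s : ℕ) :
    ∑ k ∈ range (n + 1), (-1 : ℤ) ^ (n - k) * n.choose k * (a * k + s).choose r = 0 := by
  obtain ⟨P, hdeg, hP⟩ := exists_natDegree_le_eval_eq_choose ℚ a s r
  have h := alternating_sum_range_choose_mul_eval_eq_zero (hdeg.trans_lt h)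
  simp only [hP] at h
  exact_mod_cast h

theorem alternating_binomial_identity_even (M q : ℕ) (hM : 1 ≤ M) (hq : q ≤ M - 1) :
    ∑ k ∈ Finset.range M,
        (-1 : ℤ) ^ (M - k + 1) * (Nat.choose (2 * q + 2 * k) (2 * q) : ℤ) *
          (Nat.choose (q + M) (q + k) : ℤ) =
      (Nat.choose (2 * q + 2 * M) (2 * q) : ℤ) := by
  have h := alternating_sum_range_choose_mul_choose_eq_zero (by omega : 2 * q < q + M) 2 0
  have low_terms_vanish : ∀ i ∈ range q,
      (-1 : ℤ) ^ (q + M - i) * (q + M).choose i * (2 * i + 0).choose (2 * q) = 0 := by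
    intro i hi
    rw [Nat.choose_eq_zero_of_lt (by simp at hi; omega : 2 * i + 0 < 2 * q)]
    simp
  rw [show q + M + 1 = q + (M + 1) by ring, sum_range_add, sum_eq_zero low_terms_vanish,
    sum_range_succ] at h
  simp only [Nat.add_sub_add_left, Nat.sub_self, Nat.choose_self, mul_add, add_zero,
    mul_right_comm _ ((q + M).choose _ : ℤ)] at h
  simp only [pow_succ, mul_neg_one, neg_mul, sum_neg_distrib]
  linear_combination -h
end

section
/- Let A and D be real (N+1)×(N+1) matrices with A symmetric, let ε > 0 be such that A + εI is invertible, and define the penalized modified matrix D̄ = (1/2)·D − (1/2)·(A + εI)^{−1}·Dᵀ·(A + εI). If U : ℝ → ℝ^{N+1} is differentiable with U'(t) = −D̄·U(t) for all t, then the penalized weighted quadratic norm ⟨U(t), A·U(t)⟩ + ε·‖U(t)‖² is constant in time. -/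
open Matrix

/-!
Write `M = A + εI`, a symmetric invertible matrix. The penalized matrix is
`D̄ = ½ (D - M⁻¹ Dᵀ M)`, which is skew-adjoint for the bilinear form of `M`:
`D̄ᵀ M = -M D̄`. Along any solution of `U' = -D̄ U` the derivative of `⟨U, M U⟩` is
`-⟨U, (D̄ᵀ M + M D̄) U⟩ = 0`, and `⟨U, M U⟩ = ⟨U, A U⟩ + ε ‖U‖²`.
-/

section

variable {n : Type*} [Fintype n]

theorem Matrix.isSkewAdjoint_sub_inv_mul_transpose_mul [DecidableEq n] {R : Type*} [CommRing R]
    {M : Matrix n n R} (hM : M.IsSymm) (hMunit : IsUnit M) (D : Matrix n n R) :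
    Matrix.IsSkewAdjoint M (D - M⁻¹ * Dᵀ * M) := by
  have hdet : IsUnit M.det := (isUnit_iff_isUnit_det M).mp hMunit
  have hMinvT : M⁻¹ᵀ = M⁻¹ := by rw [transpose_nonsing_inv, hM.eq]
  simp only [Matrix.IsSkewAdjoint, Matrix.IsAdjointPair, transpose_sub, transpose_mul,
    transpose_transpose, hM.eq, hMinvT, Matrix.sub_mul, Matrix.mul_neg, Matrix.mul_sub,
    nonsing_inv_mul_cancel_right _ _ hdet, ← Matrix.mul_assoc, mul_nonsing_inv _ hdet,
    Matrix.one_mul]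
  abel

theorem HasDerivAt.dotProduct {u v : ℝ → n → ℝ} {u' v' : n → ℝ} {t : ℝ}
    (hu : HasDerivAt u u' t) (hv : HasDerivAt v v' t) :
    HasDerivAt (fun s => u s ⬝ᵥ v s) (u' ⬝ᵥ v t + u t ⬝ᵥ v') t := by
  have hsum : HasDerivAt (fun s => ∑ i, u s i * v s i) (∑ i, (u' i * v t i + u t i * v' i)) t :=
    HasDerivAt.fun_sum fun i _ => (hasDerivAt_pi.mp hu i).mul (hasDerivAt_pi.mp hv i)
  simpa only [_root_.dotProduct, Finset.sum_add_distrib] using hsum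

theorem HasDerivAt.mulVec {m : Type*} [Fintype m] {u : ℝ → n → ℝ} {u' : n → ℝ} {t : ℝ}
    (M : Matrix m n ℝ) (hu : HasDerivAt u u' t) : HasDerivAt (fun s => M *ᵥ u s) (M *ᵥ u') t :=
  (mulVecLin M).toContinuousLinearMap.hasFDerivAt.comp_hasDerivAt t hu

theorem Matrix.dotProduct_mulVec_eq_of_isSkewAdjoint {M B : Matrix n n ℝ}
    (hB : Matrix.IsSkewAdjoint M B) {U : ℝ → n → ℝ} (hU : ∀ t, HasDerivAt U (B *ᵥ U t) t)
    (s t : ℝ) : U t ⬝ᵥ M *ᵥ U t = U s ⬝ᵥ M *ᵥ U s := by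
  have hderiv : ∀ t, HasDerivAt (fun r => U r ⬝ᵥ M *ᵥ U r) 0 t := by
    intro t
    convert (hU t).dotProduct ((hU t).mulVec M) using 1
    rw [mulVec_mulVec, ← vecMul_transpose, ← dotProduct_mulVec, mulVec_mulVec, hB,
      ← dotProduct_add, ← add_mulVec, Matrix.mul_neg, neg_add_cancel, zero_mulVec,
      dotProduct_zero]
  exact is_const_of_deriv_eq_zero (fun r => (hderiv r).differentiableAt)
    (fun r => (hderiv r).deriv) t s

end

theorem penalized_energy_conservation_general (N : ℕ)
    (A D : Matrix (Fin (N + 1)) (Fin (N + 1)) ℝ) (hA : A.IsSymm)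
    (ε : ℝ)
    (hinv : IsUnit (A + ε • (1 : Matrix (Fin (N + 1)) (Fin (N + 1)) ℝ)))
    (Dbar : Matrix (Fin (N + 1)) (Fin (N + 1)) ℝ)
    (hDbar : Dbar = (1 / 2 : ℝ) • D -
      (1 / 2 : ℝ) • ((A + ε • 1)⁻¹ * Dᵀ * (A + ε • 1)))
    (U : ℝ → (Fin (N + 1) → ℝ))
    (hU : ∀ t : ℝ, HasDerivAt U (-(Dbar.mulVec (U t))) t) :
    ∀ s t : ℝ,
      (U t) ⬝ᵥ (A.mulVec (U t)) + ε * ((U t) ⬝ᵥ (U t)) =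
        (U s) ⬝ᵥ (A.mulVec (U s)) + ε * ((U s) ⬝ᵥ (U s)) := by
  intro s t
  have hsymm : (A + ε • 1 : Matrix (Fin (N + 1)) (Fin (N + 1)) ℝ).IsSymm :=
    hA.add (isSymm_one.smul ε)
  have hskew : Matrix.IsSkewAdjoint (A + ε • 1) (-Dbar) := by
    rw [hDbar, ← smul_sub, ← neg_smul, ← mem_skewAdjointMatricesSubmodule]
    exact Submodule.smul_mem _ _
      ((mem_skewAdjointMatricesSubmodule _ _).mpr
        (isSkewAdjoint_sub_inv_mul_transpose_mul hsymm hinv D))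
  have hconst := dotProduct_mulVec_eq_of_isSkewAdjoint hskew
    (by simpa only [neg_mulVec] using hU) s t
  simpa only [add_mulVec, smul_mulVec, one_mulVec, dotProduct_add, dotProduct_smul,
    smul_eq_mul] using hconst

theorem penalized_energy_conservation (N : ℕ)
    (A D : Matrix (Fin (N + 1)) (Fin (N + 1)) ℝ) (hA : A.IsSymm)
    (ε : ℝ) (hε : 0 < ε)
    (hinv : IsUnit (A + ε • (1 : Matrix (Fin (N + 1)) (Fin (N + 1)) ℝ)))
    (Dbar : Matrix (Fin (N + 1)) (Fin (N + 1)) ℝ)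
    (hDbar : Dbar = (1 / 2 : ℝ) • D -
      (1 / 2 : ℝ) • ((A + ε • 1)⁻¹ * Dᵀ * (A + ε • 1)))
    (U : ℝ → (Fin (N + 1) → ℝ))
    (hU : ∀ t : ℝ, HasDerivAt U (-(Dbar.mulVec (U t))) t) :
    ∀ s t : ℝ,
      (U t) ⬝ᵥ (A.mulVec (U t)) + ε * ((U t) ⬝ᵥ (U t)) =
        (U s) ⬝ᵥ (A.mulVec (U s)) + ε * ((U s) ⬝ᵥ (U s)) :=
  penalized_energy_conservation_general N A D hA ε hinv Dbar hDbar U hU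
end
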